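/- Let D₁ ⊆ ℝ and D₂ ⊆ ℝ be closed, φ : ℝ² → ℝ continuously differentiable, D := {(x̄, x̃) ∈ ℝ² : x̄ ∈ D₁, φ(x̄, x̃) ∈ D₂}, and let x = (x̄, x̃) be a boundary point of D with ∂₂φ(x) ≠ 0. Let C : ℝ² → S² be differentiable at x, b = (b̄, b̃) : ℝ² → ℝ², and let u := (ū, 0) with ū ∈ N¹_{D₁}(x̄) (the case ũ = 0). Then the conditions [C(x)u = 0 and ⟨u, b(x) − ½ Σ_{j=1}^2 D(Ce_j)(x)(P_C(x)e_j)⟩ ≤ 0] hold if and only if: [ū ≠ 0 implies C(x) = C₂₂(x)·[[0,0],[0,1]]] and ū · ( b̄(x) − ½ 𝟙_{C₂₂(x) ≠ 0} ∂₂C₁₂(x) ) ≤ 0. -/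

import Mathlib

open Matrix Set Asymptotics
open scoped RealInnerProductSpace NNReal

noncomputable section

/-- `ℝ^d` with the Euclidean inner product and norm. -/
abbrev Vec (d : ℕ) := EuclideanSpace ℝ (Fin d)

/-- real `d × d` matrices. -/
abbrev Mat (d : ℕ) := Matrix (Fin d) (Fin d) ℝ

attribute [local instance] Matrix.normedAddCommGroup Matrix.normedSpace

/-- A matrix acting on a vector of `ℝ^d`. -/
def mv {d : ℕ} (A : Mat d) (u : Vec d) : Vec d := WithLp.toLp 2 (A.mulVec u)

/-- The `j`-th canonical basis vector of `ℝ^d`. -/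
def evec {d : ℕ} (j : Fin d) : Vec d := EuclideanSpace.single j 1

/-- The first-order normal cone `N¹_D(x)`. -/
def normalCone1 {d : ℕ} (D : Set (Vec d)) (x : Vec d) : Set (Vec d) :=
  {u | ∀ ε > (0:ℝ), ∃ δ > (0:ℝ), ∀ y ∈ D, ‖y - x‖ ≤ δ → ⟪u, y - x⟫ ≤ ε * ‖y - x‖}

/-- The second-order normal cone `N²_D(x) ⊆ ℝ^d × S^d`. -/
def normalCone2 {d : ℕ} (D : Set (Vec d)) (x : Vec d) : Set (Vec d × Mat d) :=
  {p | p.2.IsSymm ∧ ∀ ε > (0:ℝ), ∃ δ > (0:ℝ), ∀ y ∈ D, ‖y - x‖ ≤ δ →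
    ⟪p.1, y - x⟫ + (1/2:ℝ) * ⟪y - x, mv p.2 (y - x)⟫ ≤ ε * ‖y - x‖^2}

/-- The first-order normal cone for subsets of `ℝ`. -/
def normalConeR (D : Set ℝ) (x : ℝ) : Set ℝ :=
  {u | ∀ ε > (0:ℝ), ∃ δ > (0:ℝ), ∀ y ∈ D, |y - x| ≤ δ → u * (y - x) ≤ ε * |y - x|}

/-- The matrix of the orthogonal projection of `ℝ^d` onto the column space (range) of `A`,
i.e. `A A⁺` with `A⁺` the Moore–Penrose pseudoinverse. -/
def projRange {d : ℕ} (A : Mat d) : Mat d :=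
  Matrix.toEuclideanLin.symm
    (((LinearMap.range (Matrix.toEuclideanLin A)).subtypeL.comp
      ((LinearMap.range (Matrix.toEuclideanLin A)).orthogonalProjectionOnto)).toLinearMap)

/-- The element of `ℝ²` with the two given coordinates. -/
def vec2 (a b : ℝ) : Vec 2 := WithLp.toLp 2 ![a, b]

/-- The Hessian matrix of `φ : ℝ^d → ℝ` at `x`. -/
def hessMat {d : ℕ} (φ : Vec d → ℝ) (x : Vec d) : Mat d :=
  Matrix.of fun i j => fderiv ℝ (fun y => fderiv ℝ φ y (evec j)) x (evec i)

/-!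
For `ū ≠ 0`, `C(x)u = 0` says that the first column of the symmetric matrix `C(x)` vanishes,
i.e. `C(x) = c • E₂₂`. The projection onto its range then kills `e₁` and fixes `e₂` exactly
when `c ≠ 0`, so the correction term reduces to `𝟙_{c ≠ 0} D(Ce₂)(x)(e₂)`, whose first entry
is `∂₂C₁₂(x)` (in 0-based Lean indices: `e₂ = evec 1`, `C₁₂ = C · 0 1`).
-/

section MatrixValued

variable {E : Type*} [NormedAddCommGroup E] [NormedSpace ℝ E] {d : ℕ}

def mvCLM (w : Vec d) : Mat d →L[ℝ] Vec d :=
  LinearMap.toContinuousLinearMap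
    ((WithLp.linearEquiv 2 ℝ (Fin d → ℝ)).symm.toLinearMap ∘ₗ (Matrix.mulVecBilin ℝ ℝ).flip w)

lemma mv_evec_apply (A : Mat d) (i j : Fin d) : mv A (evec j) i = A i j := by
  simp [mv, evec, Matrix.mulVec_single]

lemma fderiv_mv_apply {C : E → Mat d} {x : E} (hC : DifferentiableAt ℝ C x) (w : Vec d)
    (v : E) : fderiv ℝ (fun y => mv (C y) w) x v = mv (fderiv ℝ C x v) w :=
  congrArg (· v) ((mvCLM w).hasFDerivAt.comp x hC.hasFDerivAt).fderiv

lemma fderiv_entry_apply {C : E → Mat d} {x : E} (hC : DifferentiableAt ℝ C x) (i j : Fin d)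
    (v : E) : fderiv ℝ (fun y => C y i j) x v = fderiv ℝ C x v i j := by
  let L := (PiLp.proj 2 (fun _ => ℝ) i).comp (mvCLM (evec j))
  have hL : (fun y => C y i j) = L ∘ C := funext fun y => (mv_evec_apply (C y) i j).symm
  rw [hL, (L.hasFDerivAt.comp x hC.hasFDerivAt).fderiv]
  exact mv_evec_apply _ i j

end MatrixValued

section Projection

variable {d : ℕ}

lemma mv_projRange (A : Mat d) (w : Vec d) :
    mv (projRange A) w = (LinearMap.range (Matrix.toEuclideanLin A)).starProjection w :=
  LinearMap.congr_fun (Matrix.toEuclideanLin.apply_symm_apply _) w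

lemma evec_zero_mem_orthogonal_range (c : ℝ) :
    (evec 0 : Vec 2) ∈ (LinearMap.range (Matrix.toEuclideanLin (c • !![(0:ℝ), 0; 0, 1])))ᗮ := by
  rw [Submodule.mem_orthogonal]
  rintro _ ⟨z, rfl⟩
  simp [evec, EuclideanSpace.inner_single_right, Matrix.mulVec, dotProduct, Fin.sum_univ_two]

lemma evec_one_mem_range {c : ℝ} (hc : c ≠ 0) :
    (evec 1 : Vec 2) ∈ LinearMap.range (Matrix.toEuclideanLin (c • !![(0:ℝ), 0; 0, 1])) :=
  ⟨c⁻¹ • evec 1, by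
    ext i
    fin_cases i <;> simp [Matrix.mulVec, dotProduct, Fin.sum_univ_two, evec, hc]⟩

lemma mv_projRange_smul_evec_zero (c : ℝ) :
    mv (projRange (c • !![(0:ℝ), 0; 0, 1])) (evec 0) = 0 := by
  rw [mv_projRange, Submodule.starProjection_apply_eq_zero_iff]
  exact evec_zero_mem_orthogonal_range c

lemma mv_projRange_smul_evec_one (c : ℝ) :
    mv (projRange (c • !![(0:ℝ), 0; 0, 1])) (evec 1) = (if c ≠ 0 then (1:ℝ) else 0) • evec 1 := by
  rw [mv_projRange]
  split_ifs with hc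
  · rw [one_smul, Submodule.starProjection_eq_self_iff]
    exact evec_one_mem_range hc
  · simp [not_not.1 hc]

end Projection

lemma sum_fderiv_mv_projRange_of_eq_smul {C : Vec 2 → Mat 2} {x : Vec 2} {c : ℝ}
    (hCx : C x = c • !![(0:ℝ), 0; 0, 1]) :
    ∑ j, fderiv ℝ (fun y => mv (C y) (evec j)) x (mv (projRange (C x)) (evec j)) =
      (if c ≠ 0 then (1:ℝ) else 0) • fderiv ℝ (fun y => mv (C y) (evec 1)) x (evec 1) := by
  rw [Fin.sum_univ_two, hCx, mv_projRange_smul_evec_zero, mv_projRange_smul_evec_one, map_zero,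
    map_smul, zero_add]

lemma inner_vec2_zero_left (a : ℝ) (v : Vec 2) : ⟪vec2 a 0, v⟫ = a * v 0 := by
  simp [vec2, PiLp.inner_apply, Fin.sum_univ_two, mul_comm]

lemma mv_vec2_zero_eq_zero_iff {A : Mat 2} (hA : A.IsSymm) {a : ℝ} (ha : a ≠ 0) :
    mv A (vec2 a 0) = 0 ↔ A = A 1 1 • !![(0:ℝ), 0; 0, 1] := by
  have hmv : mv A (vec2 a 0) = vec2 (A 0 0 * a) (A 1 0 * a) := by
    ext i
    fin_cases i <;> simp [mv, vec2]
  constructor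
  · intro h
    have h0 := congrArg (· 0) (hmv.symm.trans h)
    have h1 := congrArg (· 1) (hmv.symm.trans h)
    simp [vec2, ha] at h0 h1
    ext i j
    fin_cases i <;> fin_cases j <;> simp [h0, h1, ← hA.apply 0 1]
  · intro h
    rw [hmv, h]
    ext i
    fin_cases i <;> simp [vec2]

theorem stmt7_general (x : Vec 2)
    (C : Vec 2 → Mat 2) (hCsymm : ∀ y, (C y).IsSymm) (hCdiff : DifferentiableAt ℝ C x)
    (b : Vec 2 → Vec 2)
    (ub : ℝ)
    (u : Vec 2) (hu : u = vec2 ub 0) :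
    (mv (C x) u = 0 ∧
      ⟪u, b x - (1/2 : ℝ) •
        ∑ j, fderiv ℝ (fun y => mv (C y) (evec j)) x (mv (projRange (C x)) (evec j))⟫ ≤ 0)
    ↔
    ((ub ≠ 0 → C x = C x 1 1 • !![0, 0; 0, 1]) ∧
      ub * ((b x) 0 - (1/2 : ℝ) * (if C x 1 1 ≠ 0 then (1:ℝ) else 0) *
        fderiv ℝ (fun y => C y 0 1) x (evec 1)) ≤ 0) := by
  subst hu
  rcases eq_or_ne ub 0 with rfl | hub
  · rw [inner_vec2_zero_left]
    simp [mv, vec2]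
  rw [inner_vec2_zero_left, mv_vec2_zero_eq_zero_iff (hCsymm x) hub, forall_prop_of_true hub]
  refine and_congr_right fun hCx => ?_
  rw [sum_fderiv_mv_projRange_of_eq_smul hCx, fderiv_entry_apply hCdiff, PiLp.sub_apply,
    PiLp.smul_apply, PiLp.smul_apply, fderiv_mv_apply hCdiff, mv_evec_apply, smul_eq_mul,
    smul_eq_mul, mul_assoc]

/-- equivalent form of the first-order conditions at a boundary point of
`D = {(x̄, x̃) : x̄ ∈ D₁, φ(x̄, x̃) ∈ D₂}` for a normal direction with `ũ = 0`. -/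
theorem stmt7 (D₁ D₂ : Set ℝ) (hD₁ : IsClosed D₁) (hD₂ : IsClosed D₂)
    (φ : Vec 2 → ℝ) (hφ : ContDiff ℝ 1 φ)
    (D : Set (Vec 2)) (hD : D = {p : Vec 2 | p 0 ∈ D₁ ∧ φ p ∈ D₂})
    (x : Vec 2) (hx : x ∈ frontier D) (hnd : fderiv ℝ φ x (evec 1) ≠ 0)
    (C : Vec 2 → Mat 2) (hCsymm : ∀ y, (C y).IsSymm) (hCdiff : DifferentiableAt ℝ C x)
    (b : Vec 2 → Vec 2)
    (ub : ℝ) (hub : ub ∈ normalConeR D₁ (x 0))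
    (u : Vec 2) (hu : u = vec2 ub 0) :
    (mv (C x) u = 0 ∧
      ⟪u, b x - (1/2 : ℝ) •
        ∑ j, fderiv ℝ (fun y => mv (C y) (evec j)) x (mv (projRange (C x)) (evec j))⟫ ≤ 0)
    ↔
    ((ub ≠ 0 → C x = C x 1 1 • !![0, 0; 0, 1]) ∧
      ub * ((b x) 0 - (1/2 : ℝ) * (if C x 1 1 ≠ 0 then (1:ℝ) else 0) *
        fderiv ℝ (fun y => C y 0 1) x (evec 1)) ≤ 0) :=
  stmt7_general x C hCsymm hCdiff b ub u hu
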